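/- Fix an integer n ≥ 1. The function f(z) = (1/√n) Σ_{j=0}^{n−1} z^{j(n+1)} = (1/√n)(1 + z^{n+1} + z^{2(n+1)} + ⋯ + z^{(n−1)(n+1)}) is a unit vector in H² and is T_{z^n}-inner. -/

import Mathlib

open MeasureTheory Complex Filter Metric

/-- Normalized Lebesgue (arclength) measure on the unit circle `𝕋 ⊆ ℂ`. -/
noncomputable def mCirc : Measure ℂ :=
  Measure.map (fun θ : ℝ => Complex.exp (θ * Complex.I))
    ((ENNReal.ofReal (2 * Real.pi))⁻¹ • volume.restrict (Set.Ioc 0 (2 * Real.pi)))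

/-- `f` is (the boundary function of) a function in the Hardy space `H²`:
it is square integrable on `𝕋` and its negative Fourier coefficients vanish. -/
def MemH2 (f : ℂ → ℂ) : Prop :=
  MemLp f 2 mCirc ∧ ∀ n : ℕ, 1 ≤ n → ∫ z, f z * z ^ n ∂mCirc = 0

/-- `u` is (the boundary function of) an inner function: it is unimodular a.e. on `𝕋`
and its negative Fourier coefficients vanish. -/
def InnerBdry (u : ℂ → ℂ) : Prop :=
  (∀ᵐ z ∂mCirc, ‖u z‖ = 1) ∧ ∀ n : ℕ, 1 ≤ n → ∫ z, u z * z ^ n ∂mCirc = 0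

/-- `φ` is (the boundary function of) a function in `H^∞`. -/
def HinfBdry (φ : ℂ → ℂ) : Prop :=
  MemLp φ ⊤ mCirc ∧ ∀ n : ℕ, 1 ≤ n → ∫ z, φ z * z ^ n ∂mCirc = 0

/-- `f` is a `T_φ`-inner vector: a unit vector with `⟨φ^n f, f⟩ = 0` for all `n ≥ 1`. -/
def TInner (φ f : ℂ → ℂ) : Prop :=
  (∫ z, ‖f z‖ ^ 2 ∂mCirc) = 1 ∧
  ∀ n : ℕ, 1 ≤ n → ∫ z, (φ z) ^ n * (f z * (starRingEnd ℂ) (f z)) ∂mCirc = 0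

/-- `f` belongs to the model space `K_u = H² ⊖ u H²`. -/
def InKu (u f : ℂ → ℂ) : Prop :=
  MemH2 f ∧ ∀ n : ℕ, ∫ z, f z * (starRingEnd ℂ) (u z * z ^ n) ∂mCirc = 0

/-!
The monomials `z ^ a` are orthonormal for `mCirc`, so `∫ z ^ m |∑_{j ∈ s} z ^ (e j)|²` counts the
pairs `(j, k) ∈ s × s` with `m + e j = e k`. For `e j = j (n + 1)` with `j < n` these are the `n`
diagonal pairs when `m = 0`, which with the factor `1/n` gives `‖f‖ = 1`, and there are none when
`m = n k` with `k ≥ 1`, because reducing `n k + j (n + 1) = k' (n + 1)` modulo `n` forces `j = k'`.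
-/

open Finset ComplexConjugate

lemma measurable_exp_ofReal_mul_I : Measurable fun θ : ℝ => Complex.exp (θ * Complex.I) := by
  fun_prop

instance : IsProbabilityMeasure mCirc := by
  constructor
  rw [mCirc, Measure.map_apply measurable_exp_ofReal_mul_I MeasurableSet.univ]
  simp only [Set.preimage_univ, Measure.smul_apply, smul_eq_mul, Measure.restrict_apply_univ,
    Real.volume_Ioc, sub_zero]
  exact ENNReal.inv_mul_cancel (by simp [Real.pi_pos]) ENNReal.ofReal_ne_top

lemma integral_mCirc {E : Type*} [NormedAddCommGroup E] [NormedSpace ℝ E] {g : ℂ → E}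
    (hg : AEStronglyMeasurable g mCirc) :
    ∫ z, g z ∂mCirc = (2 * Real.pi)⁻¹ • ∫ θ in (0)..(2 * Real.pi), g (exp (θ * I)) := by
  rw [mCirc] at hg ⊢
  rw [integral_map measurable_exp_ofReal_mul_I.aemeasurable hg, integral_smul_measure,
    intervalIntegral.integral_of_le Real.two_pi_pos.le, ENNReal.toReal_inv,
    ENNReal.toReal_ofReal Real.two_pi_pos.le]

lemma ae_norm_eq_one_mCirc : ∀ᵐ z ∂mCirc, ‖z‖ = 1 := by
  rw [mCirc, ae_map_iff measurable_exp_ofReal_mul_I.aemeasurable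
    (isClosed_eq continuous_norm continuous_const).measurableSet]
  exact Eventually.of_forall norm_exp_ofReal_mul_I

lemma Continuous.ae_norm_le_mCirc {E : Type*} [NormedAddCommGroup E] {g : ℂ → E}
    (hg : Continuous g) :
    ∃ C : ℝ, ∀ᵐ z ∂mCirc, ‖g z‖ ≤ C := by
  obtain ⟨C, hC⟩ := (isCompact_sphere (0 : ℂ) 1).exists_bound_of_continuousOn hg.continuousOn
  refine ⟨C, ae_norm_eq_one_mCirc.mono fun z hz => hC z ?_⟩
  simpa using hz

lemma Continuous.memLp_mCirc {E : Type*} [NormedAddCommGroup E] {g : ℂ → E}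
    (hg : Continuous g) (p : ENNReal) :
    MemLp g p mCirc :=
  let ⟨C, hC⟩ := hg.ae_norm_le_mCirc
  MemLp.of_bound hg.aestronglyMeasurable C hC

lemma Continuous.integrable_mCirc {E : Type*} [NormedAddCommGroup E] {g : ℂ → E}
    (hg : Continuous g) : Integrable g mCirc :=
  memLp_one_iff_integrable.mp (hg.memLp_mCirc 1)

lemma integral_exp_int_mul_ofReal_mul_I (m : ℤ) :
    ∫ θ in (0)..(2 * Real.pi), exp (m * θ * I) = if m = 0 then ((2 * Real.pi : ℝ) : ℂ) else 0 := by
  split_ifs with hm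
  · simp [hm]
  have hc : (m : ℂ) * I ≠ 0 := mul_ne_zero (Int.cast_ne_zero.mpr hm) I_ne_zero
  simp_rw [mul_right_comm _ _ I]
  rw [integral_exp_mul_complex hc, sub_eq_zero.mpr, zero_div]
  rw [ofReal_zero, mul_zero, exp_zero, ← exp_int_mul_two_pi_mul_I m]
  push_cast
  ring_nf

lemma integral_pow_mul_conj_pow_mCirc (a b : ℕ) :
    ∫ z, z ^ a * conj z ^ b ∂mCirc = if a = b then 1 else 0 := by
  rw [integral_mCirc (by fun_prop)]
  have hexp (θ : ℝ) :
      exp (θ * I) ^ a * conj (exp (θ * I)) ^ b = exp (((a - b : ℤ) : ℂ) * θ * I) := by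
    rw [← exp_nat_mul, ← exp_conj, ← exp_nat_mul, ← exp_add, map_mul, conj_ofReal, conj_I]
    push_cast
    ring_nf
  simp_rw [hexp, integral_exp_int_mul_ofReal_mul_I, sub_eq_zero, Nat.cast_inj]
  split_ifs
  · rw [real_smul, ← ofReal_mul, inv_mul_cancel₀ Real.two_pi_pos.ne', ofReal_one]
  · rw [smul_zero]

lemma integral_pow_mCirc (a : ℕ) : ∫ z, z ^ a ∂mCirc = if a = 0 then 1 else 0 := by
  simpa using integral_pow_mul_conj_pow_mCirc a 0

lemma memH2_const_mul_sum_pow {ι : Type*} (c : ℂ) (s : Finset ι) (e : ι → ℕ) :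
    MemH2 fun z => c * ∑ j ∈ s, z ^ e j := by
  refine ⟨(by fun_prop : Continuous _).memLp_mCirc 2, fun m hm => ?_⟩
  simp_rw [mul_assoc, sum_mul, ← pow_add]
  rw [integral_const_mul,
    integral_finsetSum _ fun j _ => (by fun_prop : Continuous _).integrable_mCirc]
  simp [integral_pow_mCirc, Nat.pos_iff_ne_zero.mp hm]

lemma integral_pow_mul_sum_mul_conj_sum {ι : Type*} (m : ℕ) (s : Finset ι) (e : ι → ℕ) :
    ∫ z, z ^ m * ((∑ j ∈ s, z ^ e j) * conj (∑ k ∈ s, z ^ e k)) ∂mCirc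
      = #{p ∈ s ×ˢ s | m + e p.1 = e p.2} := by
  have hexpand (z : ℂ) : z ^ m * ((∑ j ∈ s, z ^ e j) * conj (∑ k ∈ s, z ^ e k))
      = ∑ j ∈ s, ∑ k ∈ s, z ^ (m + e j) * conj z ^ e k := by
    rw [map_sum, sum_mul_sum, mul_sum]
    simp only [map_pow, pow_add, mul_assoc, mul_sum]
  simp_rw [hexpand]
  rw [integral_finsetSum _ fun j _ => (by fun_prop : Continuous _).integrable_mCirc]
  have hinner (j : ι) : ∫ z, ∑ k ∈ s, z ^ (m + e j) * conj z ^ e k ∂mCirc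
      = ∑ k ∈ s, if m + e j = e k then 1 else 0 := by
    rw [integral_finsetSum _ fun k _ => (by fun_prop : Continuous _).integrable_mCirc]
    simp_rw [integral_pow_mul_conj_pow_mCirc]
  simp_rw [hinner]
  rw [← sum_product' s s fun j k => if m + e j = e k then (1 : ℂ) else 0, sum_boole]

lemma integral_pow_mul_mul_conj_const_mul_sum {ι : Type*} (c : ℂ) (m : ℕ) (s : Finset ι)
    (e : ι → ℕ) :
    ∫ z, z ^ m * ((c * ∑ j ∈ s, z ^ e j) * conj (c * ∑ k ∈ s, z ^ e k)) ∂mCirc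
      = ‖c‖ ^ 2 * #{p ∈ s ×ˢ s | m + e p.1 = e p.2} := by
  have hc (z : ℂ) : z ^ m * ((c * ∑ j ∈ s, z ^ e j) * conj (c * ∑ k ∈ s, z ^ e k))
      = c * conj c * (z ^ m * ((∑ j ∈ s, z ^ e j) * conj (∑ k ∈ s, z ^ e k))) := by
    rw [map_mul]; ring
  simp_rw [hc]
  rw [integral_const_mul, integral_pow_mul_sum_mul_conj_sum, mul_conj']

lemma ofReal_integral_norm_sq {α : Type*} [MeasurableSpace α] (μ : Measure α) (f : α → ℂ) :
    ((∫ x, ‖f x‖ ^ 2 ∂μ : ℝ) : ℂ) = ∫ x, f x * conj (f x) ∂μ := by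
  simp_rw [← integral_complex_ofReal, mul_conj', ofReal_pow]

lemma card_filter_product_eq_card_of_injOn {ι : Type*} {s : Finset ι} {e : ι → ℕ}
    (he : Set.InjOn e s) : #{p ∈ s ×ˢ s | e p.1 = e p.2} = #s := by
  rw [← s.diag_card]
  apply congrArg Finset.card
  ext ⟨j, k⟩
  simp only [mem_filter, mem_product, mem_diag]
  exact ⟨fun ⟨⟨hj, hk⟩, h⟩ => ⟨hj, he hj hk h⟩, fun ⟨hj, hjk⟩ => ⟨⟨hj, hjk ▸ hj⟩, hjk ▸ rfl⟩⟩

lemma mul_add_mul_succ_ne_mul_succ {n m j k : ℕ} (hm : 1 ≤ m) (hj : j < n) (hk : k < n) :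
    n * m + j * (n + 1) ≠ k * (n + 1) := by
  intro h
  have hjk : j = k := by
    have := congrArg (· % n) h
    simpa [Nat.add_mod, Nat.mul_add, Nat.mod_eq_of_lt hj, Nat.mod_eq_of_lt hk] using this
  subst hjk
  have : 0 < n * m := Nat.mul_pos (by omega) hm
  omega

/-- for `n ≥ 1`, the function
`f(z) = (1/√n)(1 + z^{n+1} + z^{2(n+1)} + ⋯ + z^{(n−1)(n+1)})`
is a unit vector in `H²` and is `T_{z^n}`-inner. -/
theorem statement8 (n : ℕ) (hn : 1 ≤ n) :
    MemH2 (fun z : ℂ =>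
      (((Real.sqrt n : ℝ) : ℂ))⁻¹ * ∑ j ∈ Finset.range n, z ^ (j * (n + 1))) ∧
    TInner (fun z : ℂ => z ^ n)
      (fun z : ℂ =>
        (((Real.sqrt n : ℝ) : ℂ))⁻¹ * ∑ j ∈ Finset.range n, z ^ (j * (n + 1))) := by
  have hnorm : ‖(((Real.sqrt n : ℝ) : ℂ))⁻¹‖ ^ 2 = (n : ℂ)⁻¹ := by
    rw [norm_inv, norm_real, Real.norm_of_nonneg (Real.sqrt_nonneg _), ofReal_inv, inv_pow,
      ← ofReal_pow, Real.sq_sqrt n.cast_nonneg, ofReal_natCast]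
  have hcount (m : ℕ) := integral_pow_mul_mul_conj_const_mul_sum (((Real.sqrt n : ℝ) : ℂ))⁻¹ m
    (range n) (fun j => j * (n + 1))
  refine ⟨memH2_const_mul_sum_pow _ _ _, ?_, fun m hm => ?_⟩
  · have hdiag : #{p ∈ range n ×ˢ range n | p.1 * (n + 1) = p.2 * (n + 1)} = n := by
      rw [card_filter_product_eq_card_of_injOn fun j _ k _ h => Nat.eq_of_mul_eq_mul_right
        n.succ_pos h, card_range]
    have h0 := hcount 0
    simp only [pow_zero, one_mul, zero_add, hdiag, hnorm] at h0
    rw [← ofReal_inj, ofReal_integral_norm_sq, h0, ofReal_one,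
      inv_mul_cancel₀ (Nat.cast_ne_zero.mpr (by omega))]
  · have hempty : #{p ∈ range n ×ˢ range n | n * m + p.1 * (n + 1) = p.2 * (n + 1)} = 0 := by
      refine card_eq_zero.mpr (filter_eq_empty_iff.mpr fun p hp => ?_)
      rw [mem_product, mem_range, mem_range] at hp
      exact mul_add_mul_succ_ne_mul_succ hm hp.1 hp.2
    simp_rw [← pow_mul]
    rw [hcount, hempty, Nat.cast_zero, mul_zero]
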